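/- Let n ≥ 2, let a_1, …, a_{n−1}, q_1, …, q_{n−1}, x_1, …, x_{n−1}, x_n, b, w_n be positive real numbers with 1 − Σ_{l=1}^{n−1} x_l/q_l > 0, and let J be the (2n−1)×(2n−1) real matrix in block form J = [[O, A, 0], [R, −b w_n I, 0], [r, 0, −b w_n]] with O the zero matrix, A = −w_n diag(a_1, …, a_{n−1}), R the (n−1)×(n−1) matrix with diagonal entries q_j − x_j and off-diagonal entries −x_j in row j, I the identity of order n−1, and r the row vector with all entries −x_n. Let ξ_{n−1} denote the largest ξ such that −ξ is a root of g(X) = ∏_{k=1}^{n−1}(X + a_k q_k) − Σ_{l=1}^{n−1} a_l x_l ∏_{k≠l}(X + a_k q_k), and set W = 4 ξ_{n−1}/b². Then W > 0 and J has at least one eigenvalue with nonzero imaginary part if and only if 0 < w_n < W. -/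
import Mathlib

open Matrix Finset


lemma auxA {ι : Type*} [Fintype ι] [DecidableEq ι] (d u : ι → ℝ) (hd : ∀ i, d i ≠ 0) :
    (Matrix.diagonal d + Matrix.replicateCol Unit u * Matrix.replicateRow Unit (fun _ => (1:ℝ))).det
      = (∏ i, d i) + ∑ l, u l * ∏ k ∈ Finset.univ.erase l, d k := by
  have h1 : Matrix.diagonal d + Matrix.replicateCol Unit u * Matrix.replicateRow Unit (fun _ => (1:ℝ))
      = Matrix.diagonal d *
        (1 + Matrix.replicateCol Unit (fun i => u i / d i) * Matrix.replicateRow Unit (fun _ => (1:ℝ))) := by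
    ext i j
    by_cases h : i = j <;>
      simp [Matrix.mul_apply, Matrix.diagonal_apply, Matrix.one_apply, Matrix.replicateCol_apply,
        Matrix.replicateRow_apply, h, mul_add] <;>
      rw [Finset.sum_add_distrib] <;>
      simp [Finset.sum_ite_eq, Finset.sum_ite_eq', h] <;> rw [mul_div_assoc'] <;> exact (mul_div_cancel_left₀ _ (hd _)).symm
  rw [h1, Matrix.det_mul, Matrix.det_one_add_replicateCol_mul_replicateRow, Matrix.det_diagonal]
  have hdot : (fun _ : ι => (1:ℝ)) ⬝ᵥ (fun i => u i / d i) = ∑ i, u i / d i := by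
    simp [dotProduct]
  rw [hdot, mul_add, mul_one, Finset.mul_sum]
  congr 1
  refine Finset.sum_congr rfl fun l _ => ?_
  rw [← Finset.mul_prod_erase univ d (Finset.mem_univ l)]
  field_simp [hd l]


lemma auxB {ι : Type*} [Fintype ι] [DecidableEq ι] (c u : ι → ℝ) (t : ℝ) :
    (Matrix.of fun i j : ι => (if i = j then t - c i else 0) + u i).det
      = (∏ i, (t - c i)) + ∑ l, u l * ∏ k ∈ Finset.univ.erase l, (t - c k) := by
  set f : ℝ → ℝ := fun t =>
    (Matrix.of fun i j : ι => (if i = j then t - c i else 0) + u i).det with hf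
  set g : ℝ → ℝ := fun t =>
    (∏ i, (t - c i)) + ∑ l, u l * ∏ k ∈ Finset.univ.erase l, (t - c k) with hgdef
  have hfc : Continuous f := by
    apply Continuous.matrix_det
    apply continuous_matrix
    intro i j
    by_cases h : i = j <;> simp [h] <;> fun_prop
  have hgc : Continuous g := by
    apply Continuous.add
    · exact continuous_finset_prod _ fun i _ => by fun_prop
    · exact continuous_finset_sum _ fun l _ =>
        (continuous_const.mul (continuous_finset_prod _ fun k _ => by fun_prop))
  have hdense : Dense ((Set.range c)ᶜ) :=
    (Set.finite_range c).countable.dense_compl ℝ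
  have heq : Set.EqOn f g ((Set.range c)ᶜ) := by
    intro s hs
    have hne : ∀ i, s - c i ≠ 0 := by
      intro i h
      exact hs ⟨i, by linarith⟩
    have h2 := auxA (fun i => s - c i) u hne
    have h3 : (Matrix.of fun i j : ι => (if i = j then s - c i else 0) + u i)
        = Matrix.diagonal (fun i => s - c i)
          + Matrix.replicateCol Unit u * Matrix.replicateRow Unit (fun _ => (1:ℝ)) := by
      ext i j
      simp [Matrix.mul_apply, Matrix.diagonal_apply, Matrix.replicateCol_apply, Matrix.replicateRow_apply]
    simpa [hf, hgdef, h3] using h2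
  exact congrFun (Continuous.ext_on hdense hfc hgc heq) t


lemma auxReal {ι : Type*} [Fintype ι] [DecidableEq ι] (A : Matrix ι ι ℝ) (c : ι → ℝ)
    (hc : ∀ i, 0 < c i) (hsym : ∀ i j, c i * A i j = c j * A j i)
    (lam : ℂ) (v : ι → ℂ) (hv : v ≠ 0)
    (heig : (A.map Complex.ofReal).mulVec v = lam • v) : lam.im = 0 := by
  set N : ℝ := ∑ i, c i * Complex.normSq (v i) with hN
  have hNpos : 0 < N := by
    obtain ⟨i0, hi0⟩ : ∃ i, v i ≠ 0 := by
      by_contra h; push_neg at h; exact hv (funext h)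
    refine Finset.sum_pos' (fun i _ => mul_nonneg (hc i).le (Complex.normSq_nonneg _))
      ⟨i0, Finset.mem_univ _, mul_pos (hc i0) (Complex.normSq_pos.2 hi0)⟩
  set Q : ℂ := ∑ i, ∑ j, (c i : ℂ) * (starRingEnd ℂ) (v i) * (A i j : ℂ) * v j with hQ
  have h1 : Q = lam * N := by
    have : Q = ∑ i, (c i : ℂ) * (starRingEnd ℂ) (v i) * ((A.map Complex.ofReal).mulVec v i) := by
      rw [hQ]
      refine Finset.sum_congr rfl fun i _ => ?_
      simp [Matrix.mulVec, dotProduct, Finset.mul_sum, mul_assoc]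
    rw [this, heig]
    push_cast [hN, Finset.mul_sum]
    refine Finset.sum_congr rfl fun i _ => ?_
    simp only [Pi.smul_apply, smul_eq_mul]
    rw [Complex.normSq_eq_conj_mul_self]
    ring
  have h2 : (starRingEnd ℂ) Q = Q := by
    rw [hQ, map_sum]
    rw [Finset.sum_comm]
    refine Finset.sum_congr rfl fun i _ => ?_
    rw [map_sum]
    refine Finset.sum_congr rfl fun j _ => ?_
    simp only [_root_.map_mul, Complex.conj_conj, Complex.conj_ofReal]
    have hcast : (c i : ℂ) * (A i j : ℂ) = (c j : ℂ) * (A j i : ℂ) := by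
      rw [← Complex.ofReal_mul, ← Complex.ofReal_mul, hsym i j]
    linear_combination (v i * (starRingEnd ℂ) (v j)) * hcast
  have h3 : (starRingEnd ℂ) Q = (starRingEnd ℂ) lam * N := by
    rw [h1, _root_.map_mul]
    congr 1
    exact Complex.conj_ofReal N
  have h4 : lam = (starRingEnd ℂ) lam := by
    have hN0 : (N : ℂ) ≠ 0 := by
      exact_mod_cast hNpos.ne'
    have := h3.symm.trans h2
    rw [h1] at this
    exact (mul_right_cancel₀ hN0 this).symm
  have := Complex.conj_eq_iff_im.mp h4.symm
  exact this


lemma auxPos {ι : Type*} [Fintype ι] [DecidableEq ι] (a q x : ι → ℝ)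
    (ha : ∀ k, 0 < a k) (hq : ∀ k, 0 < q k) (hx : ∀ k, 0 < x k)
    (hpos : 0 < 1 - ∑ l, x l / q l)
    (ξ : ℝ) (v : ι → ℝ) (hv : v ≠ 0)
    (heig : (Matrix.of fun i j : ι =>
      (if i = j then a i * q i else 0) - a i * x i).mulVec v = ξ • v) :
    0 < ξ := by
  set T : ℝ := ∑ j, v j with hT
  have key : ∀ i, a i * q i * v i - a i * x i * T = ξ * v i := by
    intro i
    have h := congrFun heig i
    simp only [Matrix.mulVec, dotProduct, Matrix.of_apply, Pi.smul_apply,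
      smul_eq_mul, sub_mul, Finset.sum_sub_distrib, ite_mul, zero_mul] at h
    rw [Finset.sum_ite_eq univ i fun j => a i * q i * v j] at h
    simp only [Finset.mem_univ, if_true] at h
    rw [← Finset.mul_sum] at h
    rw [← hT] at h
    exact h
  set S1 : ℝ := ∑ i, v i ^ 2 / (a i * x i) with hS1
  set S2 : ℝ := ∑ i, (q i / x i) * v i ^ 2 with hS2
  obtain ⟨i0, hi0⟩ : ∃ i, v i ≠ 0 := by
    by_contra h; push_neg at h; exact hv (funext h)
  have hS1pos : 0 < S1 :=
    Finset.sum_pos' (fun i _ => div_nonneg (sq_nonneg _) (mul_pos (ha i) (hx i)).le)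
      ⟨i0, Finset.mem_univ _, div_pos (by exact sq_pos_of_ne_zero hi0) (mul_pos (ha i0) (hx i0))⟩
  have hS2pos : 0 < S2 :=
    Finset.sum_pos' (fun i _ => mul_nonneg (div_nonneg (hq i).le (hx i).le) (sq_nonneg _))
      ⟨i0, Finset.mem_univ _, mul_pos (div_pos (hq i0) (hx i0)) (by exact sq_pos_of_ne_zero hi0)⟩
  have hEq : ξ * S1 = S2 - T ^ 2 := by
    rw [hS1, Finset.mul_sum, hS2]
    have : ∀ i, ξ * (v i ^ 2 / (a i * x i)) = (q i / x i) * v i ^ 2 - v i * T := by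
      intro i
      have h := key i
      have hai := (ha i).ne'
      have hxi := (hx i).ne'
      calc ξ * (v i ^ 2 / (a i * x i)) = (ξ * v i) * (v i / (a i * x i)) := by ring
        _ = (a i * q i * v i - a i * x i * T) * (v i / (a i * x i)) := by rw [← h]
        _ = (q i / x i) * v i ^ 2 - v i * T := by field_simp
    rw [Finset.sum_congr rfl fun i _ => this i, Finset.sum_sub_distrib, ← Finset.sum_mul]
    rw [← hT]
    ring
  have hCS : T ^ 2 ≤ (∑ l, x l / q l) * S2 := by
    have hfg : ∀ i, Real.sqrt (x i / q i) * (Real.sqrt (q i / x i) * v i) = v i := by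
      intro i
      rw [← mul_assoc, ← Real.sqrt_mul (div_nonneg (hx i).le (hq i).le)]
      have : x i / q i * (q i / x i) = 1 := by
        rw [div_mul_div_comm, mul_comm (x i) (q i)]
        exact div_self (mul_pos (hq i) (hx i)).ne'
      rw [this, Real.sqrt_one, one_mul]
    have := Finset.sum_mul_sq_le_sq_mul_sq univ
      (fun i => Real.sqrt (x i / q i)) (fun i => Real.sqrt (q i / x i) * v i)
    simp only [hfg] at this
    have hf2 : ∀ i, Real.sqrt (x i / q i) ^ 2 = x i / q i := fun i =>
      Real.sq_sqrt (div_nonneg (hx i).le (hq i).le)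
    have hg2 : ∀ i, (Real.sqrt (q i / x i) * v i) ^ 2 = (q i / x i) * v i ^ 2 := by
      intro i
      rw [mul_pow, Real.sq_sqrt (div_nonneg (hq i).le (hx i).le)]
    calc T ^ 2 ≤ (∑ i, Real.sqrt (x i / q i) ^ 2) * ∑ i, (Real.sqrt (q i / x i) * v i) ^ 2 :=
          this
      _ = (∑ l, x l / q l) * S2 := by
          rw [Finset.sum_congr rfl fun i _ => hf2 i, Finset.sum_congr rfl fun i _ => hg2 i]
  have hlt : T ^ 2 < S2 := lt_of_le_of_lt hCS (by nlinarith)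
  nlinarith


-- block determinant lemma, standalone
lemma auxBlock {ι : Type*} [Fintype ι] [DecidableEq ι]
    (a q x : ι → ℝ) (xn b wn : ℝ)
    (J : Matrix (ι ⊕ (ι ⊕ Unit)) (ι ⊕ (ι ⊕ Unit)) ℝ)
    (h11 : ∀ i j, J (.inl i) (.inl j) = 0)
    (h12 : ∀ i j, J (.inl i) (.inr (.inl j)) = if i = j then -(wn * a i) else 0)
    (h13 : ∀ i u, J (.inl i) (.inr (.inr u)) = 0)
    (h21 : ∀ i j, J (.inr (.inl i)) (.inl j) = if i = j then q i - x i else -x i)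
    (h22 : ∀ i j, J (.inr (.inl i)) (.inr (.inl j)) = if i = j then -(b * wn) else 0)
    (h23 : ∀ i u, J (.inr (.inl i)) (.inr (.inr u)) = 0)
    (h31 : ∀ u j, J (.inr (.inr u)) (.inl j) = -xn)
    (h32 : ∀ u j, J (.inr (.inr u)) (.inr (.inl j)) = 0)
    (h33 : ∀ u u', J (.inr (.inr u)) (.inr (.inr u')) = -(b * wn))
    (z : ℂ) (hδ : z + ((b*wn : ℝ) : ℂ) ≠ 0) :
    (z • (1 : Matrix (ι ⊕ (ι ⊕ Unit)) (ι ⊕ (ι ⊕ Unit)) ℂ) - J.map Complex.ofReal).det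
    = (z + ((b*wn : ℝ) : ℂ)) *
      ((z^2 + ((b*wn : ℝ) : ℂ)*z) • (1 : Matrix ι ι ℂ)
        + (wn : ℂ) • (Matrix.of fun i j : ι =>
            ((if i = j then a i * q i else 0) - a i * x i : ℝ) : Matrix ι ι ℝ).map Complex.ofReal).det := by
  set δ : ℂ := z + ((b*wn : ℝ) : ℂ) with hδdef
  set MC : Matrix ι ι ℂ := (Matrix.of fun i j : ι =>
      ((if i = j then a i * q i else 0) - a i * x i : ℝ) : Matrix ι ι ℝ).map Complex.ofReal with hMC
  set Bd : Matrix ι ι ℂ := Matrix.diagonal (fun i => (wn : ℂ) * (a i : ℂ)) with hBd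
  set Cm : Matrix ι ι ℂ := Matrix.of (fun i j : ι => (x i : ℂ) - if i = j then (q i : ℂ) else 0) with hCm
  set K : Matrix (ι ⊕ ι) (ι ⊕ ι) ℂ := Matrix.fromBlocks (z • 1) Bd Cm (δ • 1) with hK
  set L : Matrix Unit (ι ⊕ ι) ℂ :=
    Matrix.of (fun _ k => Sum.elim (fun _ : ι => (xn : ℂ)) (fun _ : ι => 0) k) with hL
  set D : Matrix Unit Unit ℂ := Matrix.of (fun _ _ => δ) with hD
  have h1 : (z • 1 - J.map Complex.ofReal).det
      = ((z • 1 - J.map Complex.ofReal).submatrix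
          (Equiv.sumAssoc ι ι Unit) (Equiv.sumAssoc ι ι Unit)).det :=
    (Matrix.det_submatrix_equiv_self _ _).symm
  have h2 : (z • (1 : Matrix (ι ⊕ (ι ⊕ Unit)) (ι ⊕ (ι ⊕ Unit)) ℂ)
        - J.map Complex.ofReal).submatrix (Equiv.sumAssoc ι ι Unit) (Equiv.sumAssoc ι ι Unit)
      = Matrix.fromBlocks K 0 L D := by
    ext i j
    rcases i with (i | i) | i <;> rcases j with (j | j) | j <;>
      simp [Matrix.submatrix_apply, Equiv.sumAssoc, Matrix.one_apply, hK, hBd, hCm, hL, hD,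
        hδdef, Matrix.diagonal_apply, Sum.inl.injEq, Sum.inr.injEq,
        h11, h12, h13, h21, h22, h23, h31, h32, h33] <;>
      split_ifs <;> simp_all <;> push_cast <;> ring
  have h3 : (Matrix.fromBlocks K 0 L D).det = K.det * δ := by
    rw [Matrix.det_fromBlocks_zero₁₂]
    congr 1
    rw [Matrix.det_unique]
    rfl
  have hmul : Matrix.fromBlocks (δ • (1:Matrix ι ι ℂ)) (-Bd) 0 1 * K
      = Matrix.fromBlocks ((z*δ) • (1:Matrix ι ι ℂ) - Bd * Cm) 0 Cm (δ • 1) := by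
    rw [hK, Matrix.fromBlocks_multiply]
    simp [Matrix.smul_mul, Matrix.mul_smul, smul_smul, mul_comm δ z, sub_eq_add_neg]
  have h4 : (Matrix.fromBlocks (δ • (1:Matrix ι ι ℂ)) (-Bd) 0 1 * K).det
      = δ ^ (Fintype.card ι) * K.det := by
    rw [Matrix.det_mul, Matrix.det_fromBlocks_zero₂₁, Matrix.det_one, mul_one,
      Matrix.det_smul, Matrix.det_one, mul_one]
  have h5 : (Matrix.fromBlocks ((z*δ) • (1:Matrix ι ι ℂ) - Bd * Cm) 0 Cm (δ • 1)).det
      = ((z*δ) • (1:Matrix ι ι ℂ) - Bd * Cm).det * δ ^ (Fintype.card ι) := by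
    rw [Matrix.det_fromBlocks_zero₁₂, Matrix.det_smul, Matrix.det_one, mul_one]
  have h6 : K.det = ((z*δ) • (1:Matrix ι ι ℂ) - Bd * Cm).det := by
    have := congrArg Matrix.det hmul
    rw [h4, h5] at this
    rw [mul_comm (((z*δ) • (1:Matrix ι ι ℂ) - Bd * Cm).det) (δ ^ (Fintype.card ι))] at this
    exact mul_left_cancel₀ (pow_ne_zero _ hδ) this
  have h7 : (z*δ) • (1:Matrix ι ι ℂ) - Bd * Cm
      = (z^2 + ((b*wn : ℝ) : ℂ)*z) • (1 : Matrix ι ι ℂ) + (wn : ℂ) • MC := by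
    ext i j
    by_cases h : i = j <;>
      simp [Matrix.diagonal_mul, hBd, hCm, hMC, Matrix.one_apply, h, hδdef] <;>
      push_cast <;> ring
  rw [h1, h2, h3, h6, h7, hδdef]
  ring

lemma auxQuad (b wn ξ s0 : ℝ) (hzsq : s0^2 = 4*wn*ξ - b^2*wn^2) :
    (Complex.ofReal (-(b*wn)/2) + Complex.ofReal (s0/2) * Complex.I)^2
      + ((b*wn:ℝ):ℂ)*(Complex.ofReal (-(b*wn)/2) + Complex.ofReal (s0/2) * Complex.I)
      = -((wn:ℂ) * (ξ:ℂ)) := by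
  rw [Complex.ext_iff]
  constructor <;>
    simp only [pow_two, Complex.add_re, Complex.add_im, Complex.mul_re, Complex.mul_im,
      Complex.ofReal_re, Complex.ofReal_im, Complex.I_re, Complex.I_im,
      Complex.neg_re, Complex.neg_im] <;>
    nlinarith [hzsq]



/-- Let `ξ_{n-1}` be the largest `ξ` with `g(-ξ) = 0`, where
`g(X) = ∏ₖ(X + aₖ qₖ) - ∑ₗ aₗ xₗ ∏_{k≠l}(X + aₖ qₖ)`, and `W = 4 ξ_{n-1}/b²`.
Then `W > 0`, and the Jacobian `J` has an eigenvalue with nonzero imaginary part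
iff `0 < wₙ < W`. -/
theorem stmt_13 (n : ℕ) (hn : 2 ≤ n)
    (a q x : Fin (n - 1) → ℝ) (xn b wn : ℝ)
    (ha : ∀ k, 0 < a k) (hq : ∀ k, 0 < q k) (hx : ∀ k, 0 < x k)
    (hxn : 0 < xn) (hb : 0 < b) (hwn : 0 < wn)
    (hpos : 0 < 1 - ∑ l, x l / q l)
    (J : Matrix (Fin (n - 1) ⊕ (Fin (n - 1) ⊕ Unit))
      (Fin (n - 1) ⊕ (Fin (n - 1) ⊕ Unit)) ℝ)
    (hJ : J = Matrix.of fun i j =>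
      match i, j with
      | Sum.inl _, Sum.inl _ => 0
      | Sum.inl i, Sum.inr (Sum.inl j) => if i = j then -(wn * a i) else 0
      | Sum.inl _, Sum.inr (Sum.inr _) => 0
      | Sum.inr (Sum.inl i), Sum.inl j => if i = j then q i - x i else -x i
      | Sum.inr (Sum.inl i), Sum.inr (Sum.inl j) => if i = j then -(b * wn) else 0
      | Sum.inr (Sum.inl _), Sum.inr (Sum.inr _) => 0
      | Sum.inr (Sum.inr _), Sum.inl _ => -xn
      | Sum.inr (Sum.inr _), Sum.inr (Sum.inl _) => 0
      | Sum.inr (Sum.inr _), Sum.inr (Sum.inr _) => -(b * wn))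
    (g : ℝ → ℝ)
    (hg : ∀ X, g X = ∏ k, (X + a k * q k) -
      ∑ l, a l * x l * ∏ k ∈ Finset.univ.erase l, (X + a k * q k))
    (ξ : ℝ) (hξ : IsGreatest {t : ℝ | g (-t) = 0} ξ)
    (W : ℝ) (hW : W = 4 * ξ / b ^ 2) :
    0 < W ∧
    ((∃ z : ℂ,
        (z • (1 : Matrix (Fin (n - 1) ⊕ (Fin (n - 1) ⊕ Unit))
            (Fin (n - 1) ⊕ (Fin (n - 1) ⊕ Unit)) ℂ) - J.map Complex.ofReal).det = 0 ∧
        z.im ≠ 0) ↔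
      (0 < wn ∧ wn < W)) := by
  classical
  set MR : Matrix (Fin (n-1)) (Fin (n-1)) ℝ :=
    Matrix.of (fun i j : Fin (n-1) => (if i = j then a i * q i else 0) - a i * x i) with hMR
  -- determinant ↔ g
  have hdetg : ∀ t : ℝ, ((t • (1 : Matrix (Fin (n-1)) (Fin (n-1)) ℝ)) - MR).det = 0 ↔
      g (-t) = 0 := by
    intro t
    have hform : t • (1 : Matrix (Fin (n-1)) (Fin (n-1)) ℝ) - MR
        = Matrix.of fun i j : Fin (n-1) =>
            (if i = j then t - a i * q i else 0) + a i * x i := by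
      ext i j
      by_cases h : i = j <;> simp [hMR, Matrix.one_apply, h] <;> ring
    rw [hform, auxB (fun i => a i * q i) (fun i => a i * x i) t]
    have hprodneg : ∀ (s : Finset (Fin (n-1))), (∏ k ∈ s, (-t + a k * q k))
        = (-1:ℝ)^s.card * ∏ k ∈ s, (t - a k * q k) := by
      intro s
      rw [← Finset.prod_const, ← Finset.prod_mul_distrib]
      exact Finset.prod_congr rfl fun k _ => by ring
    have hcard : (Finset.univ : Finset (Fin (n-1))).card = n - 1 := by simp
    have hgt : g (-t) = (-1:ℝ)^(n-1) *
        ((∏ i, (t - a i * q i)) +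
          ∑ l, a l * x l * ∏ k ∈ Finset.univ.erase l, (t - a k * q k)) := by
      rw [hg, hprodneg Finset.univ, hcard]
      have herase : ∀ l : Fin (n-1), (∏ k ∈ Finset.univ.erase l, (-t + a k * q k))
          = (-1:ℝ)^(n-1-1) * ∏ k ∈ Finset.univ.erase l, (t - a k * q k) := by
        intro l
        rw [hprodneg, Finset.card_erase_of_mem (Finset.mem_univ l), hcard]
      rw [Finset.sum_congr rfl fun l _ => by rw [herase l]]
      have hm1 : n - 1 = (n - 1 - 1) + 1 := by omega
      have hE : (-1:ℝ)^(n-1) = (-1:ℝ)^(n-1-1) * (-1) := by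
        conv_lhs => rw [hm1]
        rw [pow_succ]
      rw [hE, mul_add, Finset.mul_sum, sub_eq_add_neg, ← Finset.sum_neg_distrib]
      congr 1
      exact Finset.sum_congr rfl fun l _ => by ring
    constructor
    · intro h; rw [hgt, h, mul_zero]
    · intro h
      rw [hgt] at h
      rcases mul_eq_zero.mp h with h' | h'
      · exact absurd h' (pow_ne_zero _ (by norm_num))
      · exact h'
  -- real eigenvector ↔ g
  have hev : ∀ t : ℝ, (∃ v : Fin (n-1) → ℝ, v ≠ 0 ∧ MR.mulVec v = t • v) ↔ g (-t) = 0 := by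
    intro t
    rw [← hdetg t, ← Matrix.exists_mulVec_eq_zero_iff]
    constructor
    · rintro ⟨v, hv, hMv⟩
      exact ⟨v, hv, by
        rw [Matrix.sub_mulVec, Matrix.smul_mulVec, Matrix.one_mulVec, hMv, sub_self]⟩
    · rintro ⟨v, hv, hMv⟩
      refine ⟨v, hv, ?_⟩
      rw [Matrix.sub_mulVec, Matrix.smul_mulVec, Matrix.one_mulVec] at hMv
      exact (sub_eq_zero.mp hMv).symm
  have hξ0 : g (-ξ) = 0 := hξ.1
  obtain ⟨v0, hv0, hMv0⟩ := (hev ξ).mpr hξ0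
  have hξpos : 0 < ξ := auxPos a q x ha hq hx hpos ξ v0 hv0 hMv0
  have hWpos : 0 < W := by rw [hW]; positivity
  -- det over ℂ vs det over ℝ
  have hmapdet : ∀ t : ℝ,
      (((t:ℂ)) • (1 : Matrix (Fin (n-1)) (Fin (n-1)) ℂ) - MR.map Complex.ofReal).det
      = Complex.ofReal (((t • (1 : Matrix (Fin (n-1)) (Fin (n-1)) ℝ)) - MR).det) := by
    intro t
    have h1 : ((t • (1 : Matrix (Fin (n-1)) (Fin (n-1)) ℝ)) - MR).map (Complex.ofRealHom)
        = ((t:ℂ)) • (1 : Matrix (Fin (n-1)) (Fin (n-1)) ℂ) - MR.map Complex.ofReal := by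
      ext i j
      by_cases h : i = j <;> simp [Matrix.one_apply, h]
    have h2 := RingHom.map_det Complex.ofRealHom
      ((t • (1 : Matrix (Fin (n-1)) (Fin (n-1)) ℝ)) - MR)
    rw [RingHom.mapMatrix_apply, h1] at h2
    exact h2.symm
  refine ⟨hWpos, ?_, ?_⟩
  · -- forward
    rintro ⟨z, hz1, hz2⟩
    refine ⟨hwn, ?_⟩
    have hδ : z + ((b*wn : ℝ) : ℂ) ≠ 0 := by
      intro h
      apply hz2
      have := congrArg Complex.im h
      simpa using this
    rw [auxBlock a q x xn b wn J (by subst hJ; intros; rfl) (by subst hJ; intros; rfl)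
      (by subst hJ; intros; rfl) (by subst hJ; intros; rfl) (by subst hJ; intros; rfl)
      (by subst hJ; intros; rfl) (by subst hJ; intros; rfl) (by subst hJ; intros; rfl)
      (by subst hJ; intros; rfl) z hδ] at hz1
    rw [← hMR] at hz1
    have hKdet : ((z^2 + ((b*wn : ℝ) : ℂ)*z) • (1 : Matrix (Fin (n-1)) (Fin (n-1)) ℂ)
        + (wn : ℂ) • MR.map Complex.ofReal).det = 0 := by
      rcases mul_eq_zero.mp hz1 with h | h
      · exact absurd h hδ
      · exact h
    obtain ⟨v, hv, hMv⟩ := Matrix.exists_mulVec_eq_zero_iff.mpr hKdet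
    have hwnC : (wn : ℂ) ≠ 0 := by exact_mod_cast hwn.ne'
    set lam : ℂ := -(z^2 + ((b*wn : ℝ) : ℂ)*z) / (wn : ℂ) with hlam
    have heigC : (MR.map Complex.ofReal).mulVec v = lam • v := by
      rw [Matrix.add_mulVec, Matrix.smul_mulVec, Matrix.smul_mulVec,
        Matrix.one_mulVec] at hMv
      have h' : (wn:ℂ) • ((MR.map Complex.ofReal).mulVec v)
          = -((z^2 + ((b*wn : ℝ) : ℂ)*z) • v) := by
        rwa [add_comm, add_eq_zero_iff_eq_neg] at hMv
      have h'' := congrArg (fun w => (wn:ℂ)⁻¹ • w) h'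
      simp only [smul_smul, inv_mul_cancel₀ hwnC, one_smul] at h''
      rw [h'', ← neg_smul, smul_smul, hlam, div_eq_inv_mul]
    have himlam : lam.im = 0 := by
      refine auxReal MR (fun i => (a i * x i)⁻¹) (fun i => by
          have h1 := ha i; have h2 := hx i; positivity)
        (fun i j => ?_) lam v hv heigC
      by_cases h : i = j
      · rw [h]
      · have h1 : MR i j = -(a i * x i) := by simp [hMR, h]
        have h2 : MR j i = -(a j * x j) := by simp [hMR, Ne.symm h]
        rw [h1, h2]
        have ha1 := (ha i).ne'
        have hx1 := (hx i).ne'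
        have ha2 := (ha j).ne'
        have hx2 := (hx j).ne'
        field_simp
    set r : ℝ := lam.re with hrdef
    have hlamr : lam = (r : ℂ) := by
      apply Complex.ext
      · simp [hrdef]
      · simp [himlam]
    have hquad : z^2 + ((b*wn:ℝ):ℂ)*z + (wn:ℂ)*(r:ℂ) = 0 := by
      have : (wn:ℂ) * lam = -(z^2 + ((b*wn : ℝ) : ℂ)*z) := by
        rw [hlam]; field_simp
      rw [← hlamr, this]; ring
    have him := congrArg Complex.im hquad
    have hre := congrArg Complex.re hquad
    simp only [pow_two, Complex.add_im, Complex.add_re, Complex.mul_im, Complex.mul_re,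
      Complex.ofReal_re, Complex.ofReal_im, Complex.zero_im, Complex.zero_re] at him hre
    have hs : z.re = -(b*wn)/2 := by
      have h2 : (2*z.re + b*wn) * z.im = 0 := by ring_nf; ring_nf at him; linarith
      rcases mul_eq_zero.mp h2 with h | h
      · linarith
      · exact absurd h hz2
    -- r ≤ ξ
    have hdetC : ((r:ℂ) • (1 : Matrix (Fin (n-1)) (Fin (n-1)) ℂ)
        - MR.map Complex.ofReal).det = 0 := by
      apply Matrix.exists_mulVec_eq_zero_iff.mp
      refine ⟨v, hv, ?_⟩
      rw [Matrix.sub_mulVec, Matrix.smul_mulVec, Matrix.one_mulVec, heigC, hlamr, sub_self]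
    rw [hmapdet r] at hdetC
    have hdetR := Complex.ofReal_eq_zero.mp hdetC
    have hrξ : r ≤ ξ := hξ.2 ((hdetg r).mp hdetR)
    rw [hW, lt_div_iff₀ (by positivity : (0:ℝ) < b^2)]
    nlinarith [sq_pos_of_ne_zero hz2, hre, hs, hrξ, hwn, mul_pos hwn hwn,
      mul_le_mul_of_nonneg_left hrξ hwn.le]
  · -- backward
    rintro ⟨hw1, hw2⟩
    have hb2 : (0:ℝ) < b^2 := by positivity
    have hD0 : 0 < 4*wn*ξ - b^2*wn^2 := by
      rw [hW, lt_div_iff₀ hb2] at hw2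
      nlinarith
    set s0 : ℝ := Real.sqrt (4*wn*ξ - b^2*wn^2) with hs0
    have hs0pos : 0 < s0 := Real.sqrt_pos.mpr hD0
    set z : ℂ := Complex.ofReal (-(b*wn)/2) + Complex.ofReal (s0/2) * Complex.I with hz
    have hzim : z.im = s0/2 := by simp [hz]
    have hzsq : s0^2 = 4*wn*ξ - b^2*wn^2 := Real.sq_sqrt hD0.le
    have hquad : z^2 + ((b*wn:ℝ):ℂ)*z = -((wn:ℂ) * (ξ:ℂ)) := by
      rw [hz]
      exact auxQuad b wn ξ s0 hzsq
    have hzimne : z.im ≠ 0 := by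
      rw [hzim]
      exact (div_pos hs0pos two_pos).ne'
    have hδz : z + ((b*wn : ℝ) : ℂ) ≠ 0 := by
      intro h
      apply hzimne
      have := congrArg Complex.im h
      simpa using this
    refine ⟨z, ?_, hzimne⟩
    rw [auxBlock a q x xn b wn J (by subst hJ; intros; rfl) (by subst hJ; intros; rfl)
      (by subst hJ; intros; rfl) (by subst hJ; intros; rfl) (by subst hJ; intros; rfl)
      (by subst hJ; intros; rfl) (by subst hJ; intros; rfl) (by subst hJ; intros; rfl)
      (by subst hJ; intros; rfl) z hδz, ← hMR]
    have hfold : (z^2 + ((b*wn:ℝ):ℂ)*z) • (1 : Matrix (Fin (n-1)) (Fin (n-1)) ℂ)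
        + (wn:ℂ) • MR.map Complex.ofReal
        = (-(wn:ℂ)) • ((ξ:ℂ) • (1 : Matrix (Fin (n-1)) (Fin (n-1)) ℂ)
            - MR.map Complex.ofReal) := by
      rw [hquad]
      ext i j
      by_cases h : i = j <;> simp [Matrix.one_apply, h] <;> ring
    rw [hfold, Matrix.det_smul, hmapdet ξ, (hdetg ξ).mpr hξ0]
    simp
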